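/- arXiv:1503.00283 — 2 statements merged into one kernel-verified Lean document; each statement's English description precedes it below -/
import Mathlib

section
/- Let û, v̂, φ̂ be real numbers with φ̂ > 0, g > 0, û > 0, v̂ > 0, û² − gφ̂ > 0 and v̂² − gφ̂ > 0. With E₁⁰ and E₂⁰ as in the supercritical modified SWE system, define κ₀ = √(g(û² + v̂² − gφ̂)/φ̂). Then the eigenvalues of the matrix (E₂⁰)⁻¹E₁⁰ are λ₁ = (ûv̂ + φ̂κ₀)/(v̂² − gφ̂), λ₂ = (ûv̂ − φ̂κ₀)/(v̂² − gφ̂), λ₃ = û/v̂, and all three are strictly positive. -/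
/-!
Clearing the inverse, `det E₂ • charpoly (E₂⁻¹ E₁) = det (X E₂ - E₁)`, and this pencil factors
as `(v X - u) ((v² - gφ) X² - 2uv X + (u² - gφ))` because `√(gφ)` enters it only through its
square. The quadratic has discriminant `4 (uv)² - 4 (v² - gφ)(u² - gφ) = 4 (φκ₀)²`, whence `λ₁, λ₂`;
both are positive because `(v² - gφ)(u² - gφ) > 0` forces `φκ₀ < uv`.
-/
open Matrix Polynomial

theorem Matrix.C_det_mul_charpoly_inv_mul {n R : Type*} [Fintype n] [DecidableEq n] [CommRing R]
    (A B : Matrix n n R) (hB : IsUnit B.det) :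
    C B.det * (B⁻¹ * A).charpoly = ((X : R[X]) • B.map C - A.map C).det := by
  have hchar : (X : R[X]) • B.map C - A.map C = B.map C * charmatrix (B⁻¹ * A) := by
    rw [charmatrix, ← RingHom.mapMatrix_apply, mul_sub, map_mul, ← mul_assoc, ← map_mul,
      mul_nonsing_inv B hB, map_one, one_mul, scalar_apply, ← smul_one_eq_diagonal,
      Matrix.mul_smul, mul_one]
    rfl
  rw [charpoly, hchar, det_mul, ← RingHom.mapMatrix_apply, ← RingHom.map_det]

theorem det_swe_pencil {R : Type*} [CommRing R] (u v s : R) :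
    ((X : R[X]) • (!![v, 0, 0; 0, v, s; 0, s, v] : Matrix (Fin 3) (Fin 3) R).map C
      - (!![u, 0, s; 0, u, 0; s, 0, u] : Matrix (Fin 3) (Fin 3) R).map C).det
      = (C v * X - C u) *
        (C (v ^ 2 - s ^ 2) * X ^ 2 - C (2 * (u * v)) * X + C (u ^ 2 - s ^ 2)) := by
  simp only [det_fin_three, Matrix.sub_apply, Matrix.smul_apply, map_apply, of_apply, cons_val',
    cons_val_zero, cons_val_one, cons_val, cons_val_fin_one, smul_eq_mul, map_zero, map_sub,
    map_pow, map_mul, map_ofNat]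
  ring

theorem det_swe_E₂ {R : Type*} [CommRing R] (v s : R) :
    (!![v, 0, 0; 0, v, s; 0, s, v] : Matrix (Fin 3) (Fin 3) R).det = v * (v ^ 2 - s ^ 2) := by
  simp only [det_fin_three, of_apply, cons_val', cons_val_zero, cons_val_one, cons_val,
    cons_val_fin_one]
  ring

theorem quadratic_eq_C_mul_X_sub_C_mul_X_sub_C {K : Type*} [Field K] {a b c r : K} (ha : a ≠ 0)
    (hr : r ^ 2 = b ^ 2 - a * c) :
    C a * X ^ 2 - C (2 * b) * X + C c = C a * ((X - C ((b + r) / a)) * (X - C ((b - r) / a))) := by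
  have hsum : a * ((b + r) / a + (b - r) / a) = 2 * b := by field_simp; ring
  have hprod : a * ((b + r) / a * ((b - r) / a)) = c := by field_simp; linear_combination -hr
  rw [← hsum, ← hprod]
  simp only [map_mul, map_add]
  ring

/-- the eigenvalues of `(E₂⁰)⁻¹ E₁⁰` in the supercritical regime
are `λ₁ = (ûv̂ + φ̂κ₀)/(v̂² − gφ̂)`, `λ₂ = (ûv̂ − φ̂κ₀)/(v̂² − gφ̂)`, `λ₃ = û/v̂`
(stated via the factorization of the characteristic polynomial), and all three
are strictly positive. -/
theorem stmt_4 (g u v φ : ℝ) (hφ : 0 < φ) (hg : 0 < g) (hu : 0 < u) (hv : 0 < v)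
    (h1 : 0 < u ^ 2 - g * φ) (h2 : 0 < v ^ 2 - g * φ) :
    let κ₀ : ℝ := Real.sqrt (g * (u ^ 2 + v ^ 2 - g * φ) / φ)
    let E₁ : Matrix (Fin 3) (Fin 3) ℝ :=
      !![u, 0, Real.sqrt (g * φ); 0, u, 0; Real.sqrt (g * φ), 0, u]
    let E₂ : Matrix (Fin 3) (Fin 3) ℝ :=
      !![v, 0, 0; 0, v, Real.sqrt (g * φ); 0, Real.sqrt (g * φ), v]
    let l₁ : ℝ := (u * v + φ * κ₀) / (v ^ 2 - g * φ)
    let l₂ : ℝ := (u * v - φ * κ₀) / (v ^ 2 - g * φ)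
    let l₃ : ℝ := u / v
    (E₂⁻¹ * E₁).charpoly = (X - C l₁) * (X - C l₂) * (X - C l₃) ∧
      0 < l₁ ∧ 0 < l₂ ∧ 0 < l₃ := by
  intro κ₀ E₁ E₂ l₁ l₂ l₃
  have hs : Real.sqrt (g * φ) ^ 2 = g * φ := Real.sq_sqrt (by positivity)
  have hκ : (φ * κ₀) ^ 2 = (u * v) ^ 2 - (v ^ 2 - g * φ) * (u ^ 2 - g * φ) := by
    rw [mul_pow, Real.sq_sqrt (div_nonneg (mul_nonneg hg.le (by nlinarith)) hφ.le)]
    field_simp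
    ring
  have hκ_lt : φ * κ₀ < u * v := by
    refine abs_lt_of_sq_lt_sq' ?_ (by positivity) |>.2
    linarith [mul_pos h2 h1]
  have hdetE₂ : E₂.det = v * (v ^ 2 - g * φ) := by rw [det_swe_E₂, hs]
  have hdetE₂_ne : E₂.det ≠ 0 := by rw [hdetE₂]; positivity
  have hlinear : C v * X - C u = C v * (X - C l₃) := by
    rw [mul_sub, ← map_mul, mul_div_cancel₀ _ hv.ne']
  have hchar : C E₂.det * (E₂⁻¹ * E₁).charpoly =
      C E₂.det * ((X - C l₁) * (X - C l₂) * (X - C l₃)) := by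
    rw [C_det_mul_charpoly_inv_mul _ _ (isUnit_iff_ne_zero.mpr hdetE₂_ne), det_swe_pencil, hs,
      quadratic_eq_C_mul_X_sub_C_mul_X_sub_C h2.ne' hκ, hlinear, hdetE₂, map_mul]
    ring
  refine ⟨mul_left_cancel₀ (C_ne_zero.mpr hdetE₂_ne) hchar, div_pos ?_ h2,
    div_pos (by linarith) h2, div_pos hu hv⟩
  positivity
end

section
/- Under the assumptions û, v̂, φ̂ > 0, g > 0, û² − gφ̂ ≥ c₂² and v̂² − gφ̂ ≥ c₂² for some c₂ > 0, the diagonal entries a₁ = (ûκ + √(gφ̂)v̂)/(2(û²+v̂²)κ), a₂ = (ûκ − √(gφ̂)v̂)/(2(û²+v̂²)κ), a₃ = û/(û²+v̂²), b₁ = (v̂κ + √(gφ̂)û)/(2(û²+v̂²)κ), b₂ = (v̂κ − √(gφ̂)û)/(2(û²+v̂²)κ), b₃ = v̂/(û²+v̂²) are all strictly positive, where κ = √(û² + v̂² − gφ̂). -/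
/-! Each entry has a positive denominator, so only the numerators `û κ - √(gφ̂) v̂` and
`v̂ κ - √(gφ̂) û` need an argument. Squaring, `w b² < a² (a² + b² - w)` is equivalent to
`(a² - w)(a² + b²) > 0`, which is exactly the supercriticality `a² > w = gφ̂`. -/

namespace ShallowWater

variable {a b w n : ℝ}

theorem sqrt_mul_lt_mul_sqrt_sub (ha : 0 < a) (hw : w < a ^ 2) (hn : n = a ^ 2 + b ^ 2) :
    √w * b < a * √(n - w) := by
  subst hn
  have hrhs : 0 < a * √(a ^ 2 + b ^ 2 - w) :=
    mul_pos ha (Real.sqrt_pos.2 (by linarith [sq_nonneg b]))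
  rcases le_or_gt b 0 with hb | hb
  · exact (mul_nonpos_of_nonneg_of_nonpos (Real.sqrt_nonneg w) hb).trans_lt hrhs
  · rw [show √w * b = √(w * b ^ 2) by rw [Real.sqrt_mul' _ (sq_nonneg b), Real.sqrt_sq hb.le],
      Real.sqrt_lt' hrhs, mul_pow,
      Real.sq_sqrt (by linarith [sq_nonneg b])]
    nlinarith [mul_pos (sub_pos.2 hw) (by positivity : 0 < a ^ 2 + b ^ 2)]

section DiagonalEntries

variable (ha : 0 < a) (hw : w < a ^ 2) (hn : n = a ^ 2 + b ^ 2)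
include ha hw hn

theorem diagEntry_denom_pos : 0 < 2 * n * √(n - w) := by
  subst hn
  exact mul_pos (by positivity) (Real.sqrt_pos.2 (by linarith [sq_nonneg b]))

theorem diagEntry_sub_pos : 0 < (a * √(n - w) - √w * b) / (2 * n * √(n - w)) :=
  div_pos (sub_pos.2 (sqrt_mul_lt_mul_sqrt_sub ha hw hn)) (diagEntry_denom_pos ha hw hn)

theorem diagEntry_add_pos (hb : 0 ≤ b) :
    0 < (a * √(n - w) + √w * b) / (2 * n * √(n - w)) :=
  div_pos (lt_add_of_lt_of_nonneg ((mul_nonneg (Real.sqrt_nonneg w) hb).trans_lt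
      (sqrt_mul_lt_mul_sqrt_sub ha hw hn)) (mul_nonneg (Real.sqrt_nonneg w) hb))
    (diagEntry_denom_pos ha hw hn)

end DiagonalEntries

end ShallowWater

open ShallowWater in
theorem stmt_7_general (g u v φ c₂ : ℝ) (hu : 0 < u)
    (hv : 0 < v) (hc : 0 < c₂)
    (h1 : c₂ ^ 2 ≤ u ^ 2 - g * φ) (h2 : c₂ ^ 2 ≤ v ^ 2 - g * φ) :
    let κ : ℝ := Real.sqrt (u ^ 2 + v ^ 2 - g * φ)
    let s : ℝ := Real.sqrt (g * φ)
    0 < (u * κ + s * v) / (2 * (u ^ 2 + v ^ 2) * κ) ∧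
    0 < (u * κ - s * v) / (2 * (u ^ 2 + v ^ 2) * κ) ∧
    0 < u / (u ^ 2 + v ^ 2) ∧
    0 < (v * κ + s * u) / (2 * (u ^ 2 + v ^ 2) * κ) ∧
    0 < (v * κ - s * u) / (2 * (u ^ 2 + v ^ 2) * κ) ∧
    0 < v / (u ^ 2 + v ^ 2) := by
  intro κ s
  have hu' : g * φ < u ^ 2 := by linarith [pow_pos hc 2]
  have hv' : g * φ < v ^ 2 := by linarith [pow_pos hc 2]
  have hvu : u ^ 2 + v ^ 2 = v ^ 2 + u ^ 2 := add_comm _ _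
  exact ⟨diagEntry_add_pos hu hu' rfl hv.le, diagEntry_sub_pos hu hu' rfl, by positivity,
    diagEntry_add_pos hv hv' hvu hu.le, diagEntry_sub_pos hv hv' hvu, by positivity⟩

/-- positivity of the diagonal entries appearing in the
simultaneous diagonalization of the symmetrized supercritical shallow water
flux matrices. -/
theorem stmt_7 (g u v φ c₂ : ℝ) (hφ : 0 < φ) (hg : 0 < g) (hu : 0 < u)
    (hv : 0 < v) (hc : 0 < c₂)
    (h1 : c₂ ^ 2 ≤ u ^ 2 - g * φ) (h2 : c₂ ^ 2 ≤ v ^ 2 - g * φ) :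
    let κ : ℝ := Real.sqrt (u ^ 2 + v ^ 2 - g * φ)
    let s : ℝ := Real.sqrt (g * φ)
    0 < (u * κ + s * v) / (2 * (u ^ 2 + v ^ 2) * κ) ∧
    0 < (u * κ - s * v) / (2 * (u ^ 2 + v ^ 2) * κ) ∧
    0 < u / (u ^ 2 + v ^ 2) ∧
    0 < (v * κ + s * u) / (2 * (u ^ 2 + v ^ 2) * κ) ∧
    0 < (v * κ - s * u) / (2 * (u ^ 2 + v ^ 2) * κ) ∧
    0 < v / (u ^ 2 + v ^ 2) :=
  stmt_7_general g u v φ c₂ hu hv hc h1 h2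
end
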